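/- Let d = 2 and let Q_1 = [0,1/5]^2 ∈ Q_1^(2)(F^(2)). Then for every real p > 1 and every integer m ≥ 1, E_{p,m}(Q_1, Γ(Q_1)^c) ≥ 2^m (5^m + 1)^{1−p}. -/

import Mathlib

open Set MeasureTheory Filter
open scoped Classical

noncomputable section

/-- Points of `ℝ^d` with the Euclidean metric. -/
abbrev Pt (d : ℕ) := EuclideanSpace ℝ (Fin d)

/-- The closed cube `∏ [(lᵢ-1)/5ⁿ, lᵢ/5ⁿ]`. -/
def cube (d n : ℕ) (l : Fin d → ℕ) : Set (Pt d) :=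
  {x | ∀ i, ((l i : ℝ) - 1) / 5 ^ n ≤ x i ∧ x i ≤ (l i : ℝ) / 5 ^ n}

/-- The collection `𝒬ₙ⁽ᵈ⁾` of level-`n` cubes. -/
def Qcol (d n : ℕ) : Set (Set (Pt d)) :=
  {Q | ∃ l : Fin d → ℕ, (∀ i, 1 ≤ l i ∧ l i ≤ 5 ^ n) ∧ Q = cube d n l}

/-- `𝒬ₙ⁽ᵈ⁾(A)`: the level-`n` cubes whose interior meets `A`. -/
def QcolOf (d n : ℕ) (A : Set (Pt d)) : Set (Set (Pt d)) :=
  {Q | Q ∈ Qcol d n ∧ (interior Q ∩ A).Nonempty}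

/-- `F₀⁽ᵈ⁾ = [0,1]^d`. -/
def F0 (d : ℕ) : Set (Pt d) := {x | ∀ i, x i ∈ Icc (0 : ℝ) 1}

/-- `F₁⁽ᵈ⁾`. -/
def F1 (d : ℕ) : Set (Pt d) :=
  F0 d \ ⋃ i : Fin d, {x | (∀ j, j < i → x j ∈ Ioo (2/5 : ℝ) (3/5)) ∧
    x i ∈ Ioo (1/5 : ℝ) (2/5) ∪ Ioo (3/5 : ℝ) (4/5) ∧
    ∀ j, i < j → x j ∈ Ioo (2/5 : ℝ) (3/5)}

/-- The orientation-preserving affine map from `[0,1]^d` onto the cube indexed by `l` at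
level `n`. -/
def psi (d n : ℕ) (l : Fin d → ℕ) (x : Pt d) : Pt d :=
  WithLp.toLp 2 (fun i => ((l i : ℝ) - 1) / 5 ^ n + x i / 5 ^ n)

/-- The approximations `Fₙ⁽ᵈ⁾`. -/
def Fn (d : ℕ) : ℕ → Set (Pt d)
  | 0 => F0 d
  | 1 => F1 d
  | n + 2 => ⋃ l ∈ {l : Fin d → ℕ | cube d 1 l ∈ QcolOf d 1 (F1 d)}, psi d 1 l '' Fn d (n + 1)

/-- The fractal `F⁽ᵈ⁾`. -/
def Fset (d : ℕ) : Set (Pt d) := ⋂ n, Fn d n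

/-- `G₁⁽ᵈ⁾`: union of the level-1 cubes of `F₁⁽ᵈ⁾` which meet the boundary of `[0,1]^d`. -/
def G1 (d : ℕ) : Set (Pt d) :=
  ⋃ Q ∈ {Q | Q ∈ QcolOf d 1 (F1 d) ∧ (Q ∩ frontier (F0 d)).Nonempty}, Q

/-- The approximations `Gₙ⁽ᵈ⁾`. -/
def Gn (d : ℕ) : ℕ → Set (Pt d)
  | 0 => F0 d
  | 1 => G1 d
  | n + 2 => ⋃ l ∈ {l : Fin d → ℕ | cube d 1 l ∈ QcolOf d 1 (G1 d)}, psi d 1 l '' Gn d (n + 1)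

/-- The boundary fractal `G⁽ᵈ⁾ = [0,1]^d ∩ ⋂_{n ≥ 1} Gₙ⁽ᵈ⁾`. -/
def Gset (d : ℕ) : Set (Pt d) := F0 d ∩ ⋂ n, ⋂ (_ : 1 ≤ n), Gn d n

/-- The discrete `p`-energy `𝓔ₚⁿ(f)` on the level-`n` cubes of `F⁽ᵈ⁾`. -/
def energy (d n : ℕ) (p : ℝ) (f : Set (Pt d) → ℝ) : ℝ :=
  (1 / 2) * ∑' Q : QcolOf d n (Fset d), ∑' Q' : QcolOf d n (Fset d),
    if ((Q : Set (Pt d)) ∩ (Q' : Set (Pt d))).Nonempty then |f Q - f Q'| ^ p else 0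

/-- `Sᵐ(A)`: level-`(n+m)` cubes of `F⁽ᵈ⁾` contained in some cube of `A`. -/
def Sm (d n m : ℕ) (A : Set (Set (Pt d))) : Set (Set (Pt d)) :=
  {Q | Q ∈ QcolOf d (n + m) (Fset d) ∧ ∃ Q' ∈ A, Q ⊆ Q'}

/-- The effective `p`-conductance `𝓔_{p,m}(A₁, A₂)`. -/
def conduct (d n m : ℕ) (p : ℝ) (A₁ A₂ : Set (Set (Pt d))) : ℝ :=
  sInf {e : ℝ | ∃ f : Set (Pt d) → ℝ,
    (∀ Q ∈ Sm d n m A₁, f Q = 1) ∧ (∀ Q ∈ Sm d n m A₂, f Q = 0) ∧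
    e = energy d (n + m) p f}

/-- `Γ(Q)`: level-`n` cubes of `F⁽ᵈ⁾` meeting `Q`. -/
def Gam (d n : ℕ) (Q : Set (Pt d)) : Set (Set (Pt d)) :=
  {Q' | Q' ∈ QcolOf d n (Fset d) ∧ (Q' ∩ Q).Nonempty}

/-- `Γ(Q)ᶜ = 𝒬ₙ⁽ᵈ⁾(F⁽ᵈ⁾) \ Γ(Q)`. -/
def GamC (d n : ℕ) (Q : Set (Pt d)) : Set (Set (Pt d)) :=
  QcolOf d n (Fset d) \ Gam d n Q

/-- The corner cube `[0, 1/5]^d`. -/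
def Qone (d : ℕ) : Set (Pt d) := {x | ∀ i, x i ∈ Icc (0 : ℝ) (1/5)}

/-- The center cube `[2/5, 3/5]^d`. -/
def Qtwo (d : ℕ) : Set (Pt d) := {x | ∀ i, x i ∈ Icc (2/5 : ℝ) (3/5)}

end

/-!
If the base-5 expansion of `y` is finite with all digits in `{0, 4}`, the whole segment
`[0, 1] × {y}` lies in `F⁽²⁾`: the bottom and top rows of level-1 cubes are kept in `F₁⁽²⁾`, and
the construction is self-similar. Inside `Q₁` there are `2 ^ m` rows of level-`(m + 1)` cubes
crossed by such segments. In each of them the cubes from column `5 ^ m` (the last one inside `Q₁`)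
to column `2 * 5 ^ m + 1` (inside `[2/5, 3/5] × [0, 1/5]`, a cube of `Γ(Q₁)ᶜ`) form a path of
`5 ^ m + 1` edges along which an admissible `f` drops from `1` to `0`, so by Hölder's inequality
these edges carry energy at least `(5 ^ m + 1) ^ (1 - p)`.
-/

lemma finite_QcolOf (d n : ℕ) (A : Set (Pt d)) : (QcolOf d n A).Finite := by
  refine ((Set.Finite.pi fun _ : Fin d => Set.finite_Icc 1 (5 ^ n)).image (cube d n)).subset ?_
  rintro _ ⟨⟨l, hl, rfl⟩, -⟩
  exact ⟨l, fun i _ => hl i, rfl⟩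

section Cubes

variable {d n : ℕ}

lemma mem_interior_cube {l : Fin d → ℕ} {x : Pt d}
    (hx : ∀ i, ((l i : ℝ) - 1) / 5 ^ n < x i ∧ x i < l i / 5 ^ n) : x ∈ interior (cube d n l) := by
  have hopen : IsOpen {x : Pt d | ∀ i, x i ∈ Ioo (((l i : ℝ) - 1) / 5 ^ n) (l i / 5 ^ n)} := by
    simp only [ofPred_forall]
    exact isOpen_iInter_of_finite fun i => isOpen_Ioo.preimage (by fun_prop)
  exact interior_maximal (fun z hz i => ⟨(hz i).1.le, (hz i).2.le⟩) hopen hx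

lemma cube_mem_QcolOf {l : Fin d → ℕ} {A : Set (Pt d)} (hl : ∀ i, 1 ≤ l i ∧ l i ≤ 5 ^ n)
    {x : Pt d} (hx : ∀ i, ((l i : ℝ) - 1) / 5 ^ n < x i ∧ x i < l i / 5 ^ n) (hxA : x ∈ A) :
    cube d n l ∈ QcolOf d n A :=
  ⟨⟨l, hl, rfl⟩, x, mem_interior_cube hx, hxA⟩

lemma corner_mem_cube (l : Fin d → ℕ) :
    WithLp.toLp 2 (fun i => (l i : ℝ) / 5 ^ n) ∈ cube d n l :=
  fun i => ⟨div_le_div_of_nonneg_right (by linarith) (by positivity), le_rfl⟩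

lemma cube_injective : Function.Injective (cube d n) := by
  have hle {l l' : Fin d → ℕ} (h : cube d n l = cube d n l') (i : Fin d) : l i ≤ l' i := by
    have := ((h ▸ corner_mem_cube l : _ ∈ cube d n l') i).2
    exact Nat.cast_le.1 ((div_le_div_iff_of_pos_right (by positivity)).1 this)
  exact fun l l' h => funext fun i => (hle h i).antisymm (hle h.symm i)

lemma cube_inter_nonempty {l l' : Fin d → ℕ} (h : ∀ i, l i ≤ l' i ∧ l' i ≤ l i + 1) :
    (cube d n l ∩ cube d n l').Nonempty := by
  have hl (i : Fin d) : ((l' i : ℝ) - 1) ≤ l i ∧ (l i : ℝ) ≤ l' i := by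
    constructor
    · linarith [(by exact_mod_cast (h i).2 : (l' i : ℝ) ≤ l i + 1)]
    · exact Nat.cast_le.2 (h i).1
  exact ⟨_, corner_mem_cube l, fun i =>
    ⟨div_le_div_of_nonneg_right (hl i).1 (by positivity),
      div_le_div_of_nonneg_right (hl i).2 (by positivity)⟩⟩

lemma cube_subset_cube_one {m : ℕ} {l l' : Fin d → ℕ}
    (h : ∀ i, ((l' i : ℝ) - 1) * 5 ^ m + 1 ≤ l i ∧ (l i : ℝ) ≤ l' i * 5 ^ m) :
    cube d (m + 1) l ⊆ cube d 1 l' := by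
  intro x hx i
  have h5 : (0 : ℝ) < 5 ^ m := by positivity
  have hdiv (a : ℝ) : a / 5 ^ 1 = a * 5 ^ m / 5 ^ (m + 1) := by
    rw [pow_succ' (5 : ℝ) m, mul_div_mul_right _ _ h5.ne', pow_one]
  rw [hdiv, hdiv]
  exact ⟨le_trans (div_le_div_of_nonneg_right (by linarith [(h i).1]) (by positivity)) (hx i).1,
    (hx i).2.trans (div_le_div_of_nonneg_right (h i).2 (by positivity))⟩

end Cubes

lemma Qone_eq_cube (d : ℕ) : Qone d = cube d 1 1 := by
  ext x; simp [Qone, cube]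

lemma cube_pair_inj {n a b a' b' : ℕ} (h : cube 2 n ![a, b] = cube 2 n ![a', b']) :
    a = a' ∧ b = b' :=
  ⟨congrFun (cube_injective h) 0, congrFun (cube_injective h) 1⟩

-- The energy sums over ordered pairs with weight `1 / 2`, so it counts the edges `e i` and their
-- reversals once each.
lemma sum_le_energy {d n : ℕ} {ι : Type*} (p : ℝ) (f : Set (Pt d) → ℝ) (s : Finset ι)
    (e : ι → Set (Pt d) × Set (Pt d)) (he : Set.InjOn e s)
    (hrev : ∀ i ∈ s, ∀ j ∈ s, (e i).swap ≠ e j)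
    (hadj : ∀ i ∈ s, (e i).1 ∈ QcolOf d n (Fset d) ∧ (e i).2 ∈ QcolOf d n (Fset d) ∧
      ((e i).1 ∩ (e i).2).Nonempty) :
    ∑ i ∈ s, |f (e i).1 - f (e i).2| ^ p ≤ energy d n p f := by
  classical
  set T := (finite_QcolOf d n (Fset d)).toFinset
  set g : Set (Pt d) × Set (Pt d) → ℝ :=
    fun z => if (z.1 ∩ z.2).Nonempty then |f z.1 - f z.2| ^ p else 0 with hg
  have hg_swap (z) : g z.swap = g z := by
    simp only [hg, Prod.fst_swap, Prod.snd_swap, inter_comm, abs_sub_comm]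
  have hg_nonneg (z) : 0 ≤ g z := by simp only [hg]; split <;> positivity
  have hsum (φ : Set (Pt d) → ℝ) : ∑' Q : QcolOf d n (Fset d), φ Q = ∑ Q ∈ T, φ Q := by
    rw [← Finset.tsum_subtype', Set.Finite.coe_toFinset]
  have henergy : energy d n p f = 1 / 2 * ∑ z ∈ T ×ˢ T, g z := by
    rw [Finset.sum_product]
    exact congrArg _ ((hsum fun Q => ∑' Q' : QcolOf d n (Fset d), g (Q, Q')).trans
      (Finset.sum_congr rfl fun Q _ => hsum fun Q' => g (Q, Q')))
  set S := s.image e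
  have hdisj : Disjoint S (S.image Prod.swap) := by
    simp only [S, Finset.disjoint_left, Finset.mem_image]
    rintro _ ⟨i, hi, rfl⟩ ⟨_, ⟨j, hj, rfl⟩, hji⟩
    exact hrev j hj i hi hji
  have hST : S ∪ S.image Prod.swap ⊆ T ×ˢ T := by
    intro z hz
    simp only [S, Finset.mem_union, Finset.mem_image] at hz
    rcases hz with ⟨i, hi, rfl⟩ | ⟨_, ⟨i, hi, rfl⟩, rfl⟩ <;>
      simp [T, (hadj i hi).1, (hadj i hi).2.1]
  calc ∑ i ∈ s, |f (e i).1 - f (e i).2| ^ p = ∑ z ∈ S, g z := by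
        rw [Finset.sum_image he]
        exact Finset.sum_congr rfl fun i hi => (if_pos (hadj i hi).2.2).symm
    _ = 1 / 2 * ∑ z ∈ S ∪ S.image Prod.swap, g z := by
        rw [Finset.sum_union hdisj, Finset.sum_image Prod.swap_injective.injOn]
        simp only [hg_swap]; ring
    _ ≤ 1 / 2 * ∑ z ∈ T ×ˢ T, g z :=
        mul_le_mul_of_nonneg_left
          (Finset.sum_le_sum_of_subset_of_nonneg hST fun z _ _ => hg_nonneg z) (by norm_num)
    _ = energy d n p f := henergy.symm

lemma disjoint_Sm_singleton_GamC {d n m : ℕ} (Q : Set (Pt d)) :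
    Disjoint (Sm d n m {Q}) (Sm d n m (GamC d n Q)) := by
  rw [Set.disjoint_left]
  rintro Q₀ ⟨⟨-, x, hx, -⟩, _, rfl, hQ₀⟩ ⟨-, Q', ⟨hQ', hnot⟩, hQ₀'⟩
  exact hnot ⟨hQ', x, hQ₀' (interior_subset hx), hQ₀ (interior_subset hx)⟩

lemma le_conduct {d n m : ℕ} {p b : ℝ} {A₁ A₂ : Set (Set (Pt d))}
    (hdisj : Disjoint (Sm d n m A₁) (Sm d n m A₂))
    (hb : ∀ f : Set (Pt d) → ℝ, (∀ Q ∈ Sm d n m A₁, f Q = 1) → (∀ Q ∈ Sm d n m A₂, f Q = 0) →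
      b ≤ energy d (n + m) p f) :
    b ≤ conduct d n m p A₁ A₂ := by
  refine le_csInf ⟨_, (Sm d n m A₁).indicator 1, fun Q hQ => indicator_of_mem hQ 1,
    fun Q hQ => indicator_of_notMem (hdisj.notMem_of_mem_right hQ) 1, rfl⟩ ?_
  rintro _ ⟨f, hf1, hf0, rfl⟩
  exact hb f hf1 hf0

lemma rpow_one_sub_le_sum_abs_sub_rpow {p : ℝ} (hp : 1 ≤ p) (a : ℕ → ℝ) (N : ℕ)
    (h0 : a 0 = 1) (hN : a N = 0) :
    (N : ℝ) ^ (1 - p) ≤ ∑ k ∈ Finset.range N, |a (k + 1) - a k| ^ p := by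
  have hNpos : (0 : ℝ) < N := by
    rcases N.eq_zero_or_pos with rfl | h
    · norm_num [h0] at hN
    · exact_mod_cast h
  have htel : 1 ≤ ∑ k ∈ Finset.range N, |a (k + 1) - a k| := by
    calc (1 : ℝ) = |∑ k ∈ Finset.range N, (a (k + 1) - a k)| := by
          rw [Finset.sum_range_sub, hN, h0]; norm_num
      _ ≤ _ := Finset.abs_sum_le_sum_abs _ _
  have hholder : 1 ≤ (N : ℝ) ^ (p - 1) * ∑ k ∈ Finset.range N, |a (k + 1) - a k| ^ p := by
    calc (1 : ℝ) ≤ (∑ k ∈ Finset.range N, |a (k + 1) - a k|) ^ p :=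
          Real.one_le_rpow htel (by linarith)
      _ ≤ _ := by
          simpa using
            Real.rpow_sum_le_const_mul_sum_rpow (Finset.range N) (fun k => a (k + 1) - a k) hp
  calc (N : ℝ) ^ (1 - p)
      ≤ (N : ℝ) ^ (1 - p) * ((N : ℝ) ^ (p - 1) * ∑ k ∈ Finset.range N, |a (k + 1) - a k| ^ p) :=
        le_mul_of_one_le_right (by positivity) hholder
    _ = _ := by rw [← mul_assoc, ← Real.rpow_add hNpos]; norm_num

inductive HasZeroFourDigits : ℝ → Prop
  | zero : HasZeroFourDigits 0
  | digit {c : ℕ} {y : ℝ} : c = 0 ∨ c = 4 → HasZeroFourDigits y → HasZeroFourDigits ((c + y) / 5)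

namespace HasZeroFourDigits

variable {y : ℝ}

theorem mem_Icc (hy : HasZeroFourDigits y) : y ∈ Icc (0 : ℝ) 1 := by
  induction hy with
  | zero => norm_num
  | digit hc _ ih => rcases hc with rfl | rfl <;> constructor <;> norm_num <;> linarith [ih.1, ih.2]

theorem le_or_ge (hy : HasZeroFourDigits y) : y ≤ 1 / 5 ∨ 4 / 5 ≤ y := by
  cases hy with
  | zero => norm_num
  | digit hc hy' =>
    have := hy'.mem_Icc
    rcases hc with rfl | rfl
    · left; norm_num; linarith [this.2]
    · right; norm_num; linarith [this.1]

theorem exists_digit (hy : HasZeroFourDigits y) :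
    ∃ (c : ℕ) (y' : ℝ), (c = 0 ∨ c = 4) ∧ HasZeroFourDigits y' ∧ y = (c + y') / 5 := by
  cases hy with
  | zero => exact ⟨0, 0, Or.inl rfl, zero, by norm_num⟩
  | digit hc hy' => exact ⟨_, _, hc, hy', rfl⟩

theorem div_five (hy : HasZeroFourDigits y) : HasZeroFourDigits (y / 5) := by
  simpa using digit (c := 0) (Or.inl rfl) hy

end HasZeroFourDigits

lemma exists_nat_sub_one_le_mul_le {x : ℝ} (hx : x ∈ Icc (0 : ℝ) 1) {N : ℕ} (hN : 1 ≤ N) :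
    ∃ k : ℕ, 1 ≤ k ∧ k ≤ N ∧ (k : ℝ) - 1 ≤ N * x ∧ N * x ≤ k := by
  have hNx : 0 ≤ (N : ℝ) * x := mul_nonneg (Nat.cast_nonneg N) hx.1
  refine ⟨max 1 ⌈(N : ℝ) * x⌉₊, le_max_left _ _, max_le hN (Nat.ceil_le.2 ?_), ?_, ?_⟩
  · simpa using mul_le_of_le_one_right (Nat.cast_nonneg N) hx.2
  · rcases Nat.eq_zero_or_pos ⌈(N : ℝ) * x⌉₊ with h | h
    · simp [h, hNx]
    · rw [max_eq_right h]
      linarith [Nat.ceil_lt_add_one hNx]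
  · exact (Nat.le_ceil _).trans (by exact_mod_cast le_max_right _ _)

def pt (a b : ℝ) : Pt 2 := WithLp.toLp 2 ![a, b]

@[simp] lemma pt_zero (a b : ℝ) : pt a b 0 = a := rfl

@[simp] lemma pt_one (a b : ℝ) : pt a b 1 = b := rfl

lemma pt_mem_F0 {x y : ℝ} (hx : x ∈ Icc (0 : ℝ) 1) (hy : y ∈ Icc (0 : ℝ) 1) : pt x y ∈ F0 2 := by
  intro i; fin_cases i <;> simpa

lemma pt_mem_F1 {x y : ℝ} (hx : x ∈ Icc (0 : ℝ) 1) (hy : y ∈ Icc (0 : ℝ) 1)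
    (hy' : y ≤ 1 / 5 ∨ 4 / 5 ≤ y) : pt x y ∈ F1 2 := by
  refine ⟨pt_mem_F0 hx hy, ?_⟩
  simp only [mem_iUnion, mem_ofPred_eq, not_exists]
  intro i
  fin_cases i
  · rintro ⟨-, -, hmid⟩
    have := hmid 1 (by decide)
    simp only [pt_one, mem_Ioo] at this
    rcases hy' with h | h <;> linarith [this.1, this.2]
  · rintro ⟨-, hlo, -⟩
    simp only [Fin.mk_one, pt_one, mem_union, mem_Ioo] at hlo
    rcases hlo with h | h <;> rcases hy' with h' | h' <;> linarith [h.1, h.2]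

lemma psi_pt (k r : ℕ) (x y : ℝ) :
    psi 2 1 ![k, r] (pt x y) = pt ((k - 1 + x) / 5) ((r - 1 + y) / 5) := by
  ext i; fin_cases i <;> simp [psi, pt] <;> ring

lemma cube_mem_QcolOf_F1 {k r : ℕ} (hk : 1 ≤ k ∧ k ≤ 5) (hr : r = 1 ∨ r = 5) :
    cube 2 1 ![k, r] ∈ QcolOf 2 1 (F1 2) := by
  have hkR : (1 : ℝ) ≤ k ∧ (k : ℝ) ≤ 5 := by exact_mod_cast hk
  refine cube_mem_QcolOf (x := pt ((2 * k - 1) / 10) ((2 * r - 1) / 10)) ?_ ?_ (pt_mem_F1 ?_ ?_ ?_)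
  · intro i; fin_cases i
    · simpa using hk
    · rcases hr with rfl | rfl <;> simp
  · intro i; fin_cases i <;> simp
    · constructor <;> linarith
    · rcases hr with rfl | rfl <;> norm_num
  · constructor <;> linarith
  all_goals rcases hr with rfl | rfl <;> norm_num

lemma pt_mem_Fn : ∀ (n : ℕ) {x y : ℝ}, x ∈ Icc (0 : ℝ) 1 → HasZeroFourDigits y → pt x y ∈ Fn 2 n
  | 0, _, _, hx, hy => pt_mem_F0 hx hy.mem_Icc
  | 1, _, _, hx, hy => pt_mem_F1 hx hy.mem_Icc hy.le_or_ge
  | n + 2, x, _, hx, hy => by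
    obtain ⟨k, hk1, hk5, hkx⟩ := exists_nat_sub_one_le_mul_le hx (N := 5) (by norm_num)
    obtain ⟨c, y, hc, hy', rfl⟩ := hy.exists_digit
    have hcube : cube 2 1 ![k, c + 1] ∈ QcolOf 2 1 (F1 2) :=
      cube_mem_QcolOf_F1 ⟨hk1, hk5⟩ (by omega)
    refine mem_biUnion hcube ⟨pt (5 * x - (k - 1)) y, pt_mem_Fn (n + 1) ?_ hy', ?_⟩
    · push_cast at hkx; constructor <;> linarith
    · rw [psi_pt]; push_cast; congr 1 <;> ring

lemma pt_mem_Fset {x y : ℝ} (hx : x ∈ Icc (0 : ℝ) 1) (hy : HasZeroFourDigits y) :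
    pt x y ∈ Fset 2 :=
  mem_iInter.2 fun n => pt_mem_Fn n hx hy

-- `r ∈ lineRows m` iff the base-5 digits of `r - 1 < 5 ^ m` are all `0` or `4`: the level-`m`
-- rows whose interior is crossed by a segment `[0, 1] × {y}` with `HasZeroFourDigits y`.
def lineRows : ℕ → Finset ℕ
  | 0 => {1}
  | m + 1 => lineRows m ∪ (lineRows m).map (addRightEmbedding (4 * 5 ^ m))

lemma mem_lineRows_bounds {m r : ℕ} (hr : r ∈ lineRows m) : 1 ≤ r ∧ r ≤ 5 ^ m := by
  induction m generalizing r with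
  | zero => simp_all [lineRows]
  | succ m ih =>
    simp only [lineRows, Finset.mem_union, Finset.mem_map, addRightEmbedding_apply] at hr
    rw [pow_succ]
    rcases hr with hr | ⟨r, hr, rfl⟩ <;> have := ih hr <;> omega

lemma card_lineRows (m : ℕ) : (lineRows m).card = 2 ^ m := by
  induction m with
  | zero => rfl
  | succ m ih =>
    rw [lineRows, Finset.card_union_of_disjoint, Finset.card_map, ih, pow_succ, mul_two]
    rw [Finset.disjoint_left]
    intro r hr hr'
    obtain ⟨r', hr'', rfl⟩ := Finset.mem_map.1 hr'
    have := mem_lineRows_bounds hr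
    have := mem_lineRows_bounds hr''
    simp only [addRightEmbedding_apply] at *
    omega

lemma exists_height_of_mem_lineRows {m r : ℕ} (hr : r ∈ lineRows m) :
    ∃ y, HasZeroFourDigits y ∧ ((r : ℝ) - 1) / 5 ^ m < y ∧ y < r / 5 ^ m := by
  induction m generalizing r with
  | zero =>
    obtain rfl : r = 1 := by simpa [lineRows] using hr
    exact ⟨(4 + 0) / 5, .digit (c := 4) (Or.inr rfl) .zero, by norm_num, by norm_num⟩
  | succ m ih =>
    simp only [lineRows, Finset.mem_union, Finset.mem_map, addRightEmbedding_apply] at hr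
    have h5 : (0 : ℝ) < 5 ^ m := by positivity
    rcases hr with hr | ⟨r, hr, rfl⟩
    · obtain ⟨y, hy, hlo, hhi⟩ := ih hr
      refine ⟨y / 5, hy.div_five, ?_, ?_⟩ <;> rw [pow_succ, ← div_div] <;> gcongr
    · obtain ⟨y, hy, hlo, hhi⟩ := ih hr
      have hshift (a : ℝ) : (a + 4 * 5 ^ m) / 5 ^ m = a / 5 ^ m + 4 := by field_simp
      refine ⟨(4 + y) / 5, .digit (c := 4) (Or.inr rfl) hy, ?_, ?_⟩ <;>
        rw [pow_succ, ← div_div] <;> push_cast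
      · rw [add_sub_right_comm, hshift]; linarith
      · rw [hshift]; linarith

lemma row_cube_mem_QcolOf {m r j : ℕ} (hr : r ∈ lineRows m) (hj : 1 ≤ j ∧ j ≤ 5 ^ (m + 1)) :
    cube 2 (m + 1) ![j, r] ∈ QcolOf 2 (m + 1) (Fset 2) := by
  obtain ⟨y, hy, hlo, hhi⟩ := exists_height_of_mem_lineRows hr
  have hr' := mem_lineRows_bounds hr
  have hjR : (1 : ℝ) ≤ j ∧ (j : ℝ) ≤ 5 ^ (m + 1) := by exact_mod_cast hj
  have h5 : (0 : ℝ) < 5 ^ (m + 1) := by positivity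
  refine cube_mem_QcolOf (x := pt ((j - 1 / 2) / 5 ^ (m + 1)) (y / 5)) ?_ ?_
    (pt_mem_Fset ⟨div_nonneg (by linarith) h5.le, ?_⟩ hy.div_five)
  · refine Fin.forall_fin_two.2 ⟨hj, hr'.1, ?_⟩
    exact hr'.2.trans (Nat.pow_le_pow_right (by norm_num) m.le_succ)
  · refine Fin.forall_fin_two.2 ⟨?_, ?_⟩ <;>
      simp only [pt_zero, pt_one, Matrix.cons_val_zero, Matrix.cons_val_one]
    · exact ⟨div_lt_div_of_pos_right (by linarith) h5, div_lt_div_of_pos_right (by linarith) h5⟩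
    · rw [pow_succ, ← div_div, ← div_div]
      exact ⟨div_lt_div_of_pos_right hlo (by norm_num), div_lt_div_of_pos_right hhi (by norm_num)⟩
  · rw [div_le_one h5]; linarith

lemma cube_three_one_mem_GamC : cube 2 1 ![3, 1] ∈ GamC 2 1 (Qone 2) := by
  refine ⟨row_cube_mem_QcolOf (m := 0) (by simp [lineRows]) (by norm_num), ?_⟩
  rintro ⟨-, z, hz, hz'⟩
  have h1 := (hz 0).1
  have h2 := (hz' 0).2
  norm_num at h1 h2
  linarith

lemma row_start_mem_Sm {m r : ℕ} (hr : r ∈ lineRows m) :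
    cube 2 (m + 1) ![5 ^ m, r] ∈ Sm 2 1 m {Qone 2} := by
  have hr' : (1 : ℝ) ≤ r ∧ (r : ℝ) ≤ 5 ^ m := by exact_mod_cast mem_lineRows_bounds hr
  refine ⟨?_, Qone 2, rfl, ?_⟩
  · rw [Nat.add_comm]
    exact row_cube_mem_QcolOf hr
      ⟨Nat.one_le_pow m 5 (by norm_num), Nat.pow_le_pow_right (by norm_num) m.le_succ⟩
  · rw [Qone_eq_cube]
    refine cube_subset_cube_one (Fin.forall_fin_two.2 ⟨?_, ?_⟩) <;> simp [hr']
    exact one_le_pow₀ (by norm_num)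

lemma row_end_mem_Sm {m r : ℕ} (hr : r ∈ lineRows m) :
    cube 2 (m + 1) ![2 * 5 ^ m + 1, r] ∈ Sm 2 1 m (GamC 2 1 (Qone 2)) := by
  have hr' : (1 : ℝ) ≤ r ∧ (r : ℝ) ≤ 5 ^ m := by exact_mod_cast mem_lineRows_bounds hr
  have h5 : 1 ≤ 5 ^ m := Nat.one_le_pow m 5 (by norm_num)
  have h5R : (1 : ℝ) ≤ 5 ^ m := by exact_mod_cast h5
  refine ⟨?_, cube 2 1 ![3, 1], cube_three_one_mem_GamC, ?_⟩
  · rw [Nat.add_comm]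
    exact row_cube_mem_QcolOf hr ⟨by omega, by rw [pow_succ]; omega⟩
  · refine cube_subset_cube_one (Fin.forall_fin_two.2 ⟨?_, ?_⟩) <;> simp [hr']
    constructor <;> linarith

lemma two_pow_mul_rpow_le_energy {p : ℝ} (hp : 1 ≤ p) (m : ℕ) (f : Set (Pt 2) → ℝ)
    (hf1 : ∀ Q ∈ Sm 2 1 m {Qone 2}, f Q = 1)
    (hf0 : ∀ Q ∈ Sm 2 1 m (GamC 2 1 (Qone 2)), f Q = 0) :
    (2 : ℝ) ^ m * (5 ^ m + 1 : ℝ) ^ (1 - p) ≤ energy 2 (1 + m) p f := by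
  set C : ℕ → ℕ → Set (Pt 2) := fun r j => cube 2 (m + 1) ![j, r]
  set e : ℕ × ℕ → Set (Pt 2) × Set (Pt 2) :=
    fun rk => (C rk.1 (5 ^ m + rk.2), C rk.1 (5 ^ m + rk.2 + 1))
  have hchain (r : ℕ) (hr : r ∈ lineRows m) : (5 ^ m + 1 : ℝ) ^ (1 - p) ≤
      ∑ k ∈ Finset.range (5 ^ m + 1), |f (e (r, k)).1 - f (e (r, k)).2| ^ p := by
    have := rpow_one_sub_le_sum_abs_sub_rpow hp (fun k => f (C r (5 ^ m + k))) (5 ^ m + 1)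
      (hf1 _ (row_start_mem_Sm hr)) (by simpa [two_mul, add_assoc] using hf0 _ (row_end_mem_Sm hr))
    simpa [e, abs_sub_comm, add_assoc] using this
  set s := lineRows m ×ˢ Finset.range (5 ^ m + 1)
  have hinj : Set.InjOn e s := by
    rintro ⟨r, k⟩ - ⟨r', k'⟩ - h
    obtain ⟨hk, hr⟩ := cube_pair_inj (congrArg Prod.fst h)
    simp only at hk hr
    rw [hr, Nat.add_left_cancel hk]
  have hrev : ∀ i ∈ s, ∀ j ∈ s, (e i).swap ≠ e j := by
    rintro ⟨r, k⟩ - ⟨r', k'⟩ - h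
    have h1 := (cube_pair_inj (congrArg Prod.fst h)).1
    have h2 := (cube_pair_inj (congrArg Prod.snd h)).1
    omega
  have hadj : ∀ i ∈ s, (e i).1 ∈ QcolOf 2 (1 + m) (Fset 2) ∧
      (e i).2 ∈ QcolOf 2 (1 + m) (Fset 2) ∧ ((e i).1 ∩ (e i).2).Nonempty := by
    rintro ⟨r, k⟩ hrk
    obtain ⟨hr, hk⟩ := Finset.mem_product.1 hrk
    have hk' := Finset.mem_range.1 hk
    have h5 : 5 ^ (m + 1) = 5 * 5 ^ m := pow_succ' 5 m
    have h5' := Nat.one_le_pow m 5 (by norm_num)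
    rw [Nat.add_comm 1 m]
    refine ⟨row_cube_mem_QcolOf hr ⟨by omega, by omega⟩,
      row_cube_mem_QcolOf hr ⟨by omega, by omega⟩,
      cube_inter_nonempty (Fin.forall_fin_two.2 ⟨?_, ?_⟩)⟩ <;> simp
  calc (2 : ℝ) ^ m * (5 ^ m + 1 : ℝ) ^ (1 - p)
      = ∑ r ∈ lineRows m, (5 ^ m + 1 : ℝ) ^ (1 - p) := by simp [card_lineRows]
    _ ≤ ∑ r ∈ lineRows m, ∑ k ∈ Finset.range (5 ^ m + 1), |f (e (r, k)).1 - f (e (r, k)).2| ^ p :=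
        Finset.sum_le_sum hchain
    _ = ∑ rk ∈ s, |f (e rk).1 - f (e rk).2| ^ p :=
        (Finset.sum_product _ _ fun rk => |f (e rk).1 - f (e rk).2| ^ p).symm
    _ ≤ energy 2 (1 + m) p f := sum_le_energy p f _ e hinj hrev hadj

theorem statement2_general (p : ℝ) (hp : 1 < p) (m : ℕ) :
    (2 : ℝ) ^ m * (5 ^ m + 1 : ℝ) ^ (1 - p) ≤
      conduct 2 1 m p {Qone 2} (GamC 2 1 (Qone 2)) :=
  le_conduct (disjoint_Sm_singleton_GamC _) fun f hf1 hf0 =>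
    two_pow_mul_rpow_le_energy hp.le m f hf1 hf0

/-- Lower bound on the conductance of the corner cube `Q₁ = [0,1/5]²` in `F⁽²⁾`. -/
theorem statement2 (p : ℝ) (hp : 1 < p) (m : ℕ) (hm : 1 ≤ m) :
    (2 : ℝ) ^ m * (5 ^ m + 1 : ℝ) ^ (1 - p) ≤
      conduct 2 1 m p {Qone 2} (GamC 2 1 (Qone 2)) :=
  statement2_general p hp m
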